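/- Let Γ be a finitely generated group and suppose the characters of Γ' corresponding to one-dimensional quotients of a finite-dimensional module are defined over the ring of integers O_K of a number field K. If a finite set S of characters Γ → C* is stable under Aut(C), takes values in O_K* after every embedding K ↪ C, and consists of unitary characters, then S consists of torsion characters. -/

import Mathlib

/-!
Write `ρ γ = τ x` with `x` a unit of `𝓞 K`. Any other embedding `φ : K → ℂ` equals `σ ∘ τ` for
some `σ ∈ Aut(ℂ)`: two algebraically closed fields of the same uncountable cardinality are
isomorphic over any common countable subfield, by matching transcendence bases. As `σ ∘ ρ ∈ S`
is unitary, all conjugates of `x` have absolute value one, so `x` is a root of unity by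
Kronecker's theorem. A homomorphism from a finitely generated group whose values are torsion
is itself torsion.
-/

open NumberField

universe u

theorem IsAlgClosed.equivOfTranscendenceBasis_algebraMap {R K L : Type*} [CommRing R]
    [Field K] [Field L] [Algebra R K] [Algebra R L] [IsAlgClosed K] [IsAlgClosed L]
    {ι κ : Type*} {v : ι → K} {w : κ → L} (e : ι ≃ κ)
    (hv : IsTranscendenceBasis R v) (hw : IsTranscendenceBasis R w) (r : R) :
    IsAlgClosed.equivOfTranscendenceBasis v w e hv hw (algebraMap R K r) = algebraMap R L r := by
  let _ := IsAlgClosed.isAlgClosure_of_transcendence_basis v hv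
  let _ := IsAlgClosed.isAlgClosure_of_transcendence_basis w hw
  rw [IsScalarTower.algebraMap_apply R (Algebra.adjoin R (Set.range v)) K,
    IsScalarTower.algebraMap_apply R (Algebra.adjoin R (Set.range w)) L]
  unfold IsAlgClosed.equivOfTranscendenceBasis
  rw [IsAlgClosure.equivOfEquiv_algebraMap]
  congr 1
  simpa using hw.1.aevalEquiv.commutes r

theorem IsAlgClosed.exists_ringEquiv_comp_eq {F K L : Type u} [Field F] [Countable F]
    [Field K] [Field L] [IsAlgClosed K] [IsAlgClosed L]
    (hK : Cardinal.aleph0 < Cardinal.mk K) (hKL : Cardinal.mk K = Cardinal.mk L)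
    (f : F →+* K) (g : F →+* L) : ∃ σ : K ≃+* L, σ.toRingHom.comp f = g := by
  let _ := f.toAlgebra
  let _ := g.toAlgebra
  obtain ⟨s, hs⟩ := exists_isTranscendenceBasis F K
  obtain ⟨t, ht⟩ := exists_isTranscendenceBasis F L
  have hF : Cardinal.mk F ≤ Cardinal.aleph0 := Cardinal.mk_le_aleph0
  have hs_card := cardinal_eq_cardinal_transcendence_basis_of_aleph0_lt' _ hs hF hK
  have ht_card := cardinal_eq_cardinal_transcendence_basis_of_aleph0_lt' _ ht hF (hKL ▸ hK)
  obtain ⟨e⟩ := Cardinal.eq.1 (hs_card.symm.trans (hKL.trans ht_card))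
  exact ⟨equivOfTranscendenceBasis _ _ e hs ht,
    RingHom.ext (equivOfTranscendenceBasis_algebraMap e hs ht)⟩

theorem NumberField.exists_ringEquiv_comp_eq {K : Type} [Field K] [NumberField K]
    (τ φ : K →+* ℂ) : ∃ σ : ℂ ≃+* ℂ, σ.toRingHom.comp τ = φ :=
  have : Countable K := Finsupp.Countable.of_moduleFinite (R := ℚ)
  IsAlgClosed.exists_ringEquiv_comp_eq
    (by rw [Cardinal.mk_complex]; exact Cardinal.aleph0_lt_continuum) rfl τ φ

theorem Group.FG.isOfFinOrder_monoidHom {Γ G : Type*} [Group Γ] [CommMonoid G] (hfg : Group.FG Γ)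
    {ρ : Γ →* G} (h : ∀ γ, IsOfFinOrder (ρ γ)) : IsOfFinOrder ρ := by
  obtain ⟨T, hT⟩ := hfg.out
  refine isOfFinOrder_iff_pow_eq_one.2 ⟨∏ g ∈ T, orderOf (ρ g),
    Finset.prod_pos fun g _ => (h g).orderOf_pos, MonoidHom.eq_of_eqOn_dense hT fun g hg => ?_⟩
  simpa using orderOf_dvd_iff_pow_eq_one.1 (Finset.dvd_prod_of_mem (fun g => orderOf (ρ g)) hg)

theorem statement15_general {Γ : Type} [Group Γ] (hfg : Group.FG Γ)
    {K : Type} [Field K] [NumberField K]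
    (S : Set (Γ →* ℂˣ))
    (hstable : ∀ ρ ∈ S, ∀ σ : ℂ ≃+* ℂ,
      (Units.map σ.toRingHom.toMonoidHom).comp ρ ∈ S)
    (hint : ∀ ρ ∈ S, ∀ τ : K →+* ℂ, ∃ ψ : Γ →* (𝓞 K)ˣ,
      ∀ γ : Γ, (ρ γ : ℂ) = τ ((ψ γ : 𝓞 K) : K))
    (hunitary : ∀ ρ ∈ S, ∀ γ : Γ, ‖((ρ γ : ℂ))‖ = 1) :
    ∀ ρ ∈ S, IsOfFinOrder ρ := by
  intro ρ hρ
  obtain ⟨τ⟩ := (inferInstance : Nonempty (K →+* ℂ))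
  obtain ⟨ψ, hψ⟩ := hint ρ hρ τ
  refine hfg.isOfFinOrder_monoidHom fun γ => ?_
  have hconj : ∀ φ : K →+* ℂ, ‖φ (ψ γ : 𝓞 K)‖ = 1 := by
    intro φ
    obtain ⟨σ, rfl⟩ := NumberField.exists_ringEquiv_comp_eq τ φ
    simpa [hψ] using hunitary _ (hstable ρ hρ σ) γ
  obtain ⟨n, hn, hpow⟩ := Embeddings.pow_eq_one_of_norm_eq_one K ℂ
    (RingOfIntegers.isIntegral_coe _) hconj
  exact isOfFinOrder_iff_pow_eq_one.2 ⟨n, hn, Units.ext (by simpa [hψ] using congrArg τ hpow)⟩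

/-- Let `Γ` be a finitely generated group and `K` a number field with ring of
integers `𝓞 K`.  If a finite set `S` of characters `Γ → ℂ*` is stable under
`Aut(ℂ)`, each character of `S` takes values in `𝓞 K*` after every embedding
`K ↪ ℂ`, and `S` consists of unitary characters, then `S` consists of torsion
characters. -/
theorem statement15 {Γ : Type} [Group Γ] (hfg : Group.FG Γ)
    {K : Type} [Field K] [NumberField K]
    (S : Set (Γ →* ℂˣ)) (hSfin : S.Finite)
    (hstable : ∀ ρ ∈ S, ∀ σ : ℂ ≃+* ℂ,
      (Units.map σ.toRingHom.toMonoidHom).comp ρ ∈ S)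
    (hint : ∀ ρ ∈ S, ∀ τ : K →+* ℂ, ∃ ψ : Γ →* (𝓞 K)ˣ,
      ∀ γ : Γ, (ρ γ : ℂ) = τ ((ψ γ : 𝓞 K) : K))
    (hunitary : ∀ ρ ∈ S, ∀ γ : Γ, ‖((ρ γ : ℂ))‖ = 1) :
    ∀ ρ ∈ S, IsOfFinOrder ρ :=
  statement15_general hfg S hstable hint hunitary
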